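/- arXiv:2409.09064 — 4 statements merged into one kernel-verified Lean document; each statement's English description precedes it below -/
import Mathlib

section
/- Let p : ℕ⁺ → ℝ be a sequence of box prices with p_n ≥ 0 and ∑_{n=1}^∞ p_n = 1. If there exists a permutation δ of the positive integers such that ∑_{n=1}^∞ n·p_{δ(n)} < ∞, then a strategy exists: there is a sequence a : ℕ⁺ → ℝ with a_n ≥ 0 and ∑_{n=1}^∞ a_n = 1 such that for every finite-cycle-permutation σ of the positive integers, the set {n : a_n ≥ ∑_{m ∈ orbit_σ(n)} p_m} is infinite. -/
open scoped BigOperators ENNReal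

/-- A permutation of the positive integers all of whose cycles (orbits) are finite. -/
def FiniteCycles (s : Equiv.Perm ℕ+) : Prop :=
  ∀ n : ℕ+, {m : ℕ+ | s.SameCycle n m}.Finite

/-- The price of the cycle of `n` under the permutation `s`, for box prices `p`. -/
noncomputable def cyclePrice (s : Equiv.Perm ℕ+) (p : ℕ+ → ℝ) (n : ℕ+) : ℝ :=
  ∑' m : {m : ℕ+ | s.SameCycle n m}, p m

/-!
Reindex the boxes by `δ`, so that `q = p ∘ δ` has `∑ n q n < ∞`. Then the tail sums
`t n = ∑_{i ≥ n} q i` are summable (their total is `∑ n q n`), so some probability vector `b`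
dominates `t` off a finite set. Conjugating `σ` by `δ` turns the cycle prices of `σ` under `p`
into those of `δ⁻¹ σ δ` under `q`; the price of a cycle whose least element is `n` is at most
`t n`. A permutation of `ℕ+` with finite cycles has infinitely many cycles, hence infinitely
many cycle minima outside the exceptional set, and `a = b ∘ δ⁻¹` works.
-/

open Equiv Set Filter

noncomputable def tailSum {ι : Type*} [Preorder ι] (q : ι → ℝ) (n : ι) : ℝ :=
  ∑' i, (Ici n).indicator q i

lemma tailSum_nonneg {ι : Type*} [Preorder ι] {q : ι → ℝ} (hq0 : ∀ n, 0 ≤ q n) (n : ι) :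
    0 ≤ tailSum q n :=
  tsum_nonneg fun i => indicator_nonneg (fun i _ => hq0 i) i

lemma summable_of_summable_pnat_mul {q : ℕ+ → ℝ} (hq0 : ∀ n, 0 ≤ q n)
    (hq : Summable fun n : ℕ+ => (n : ℝ) * q n) : Summable q :=
  hq.of_nonneg_of_le hq0 fun n => le_mul_of_one_le_left (hq0 n) (Nat.one_le_cast.2 n.pos)

lemma sum_indicator_Ici_le (q : ℕ+ → ℝ) (hq0 : ∀ n, 0 ≤ q n) (u : Finset ℕ+) (i : ℕ+) :
    ∑ n ∈ u, (Ici n).indicator q i ≤ (i : ℝ) * q i := by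
  calc ∑ n ∈ u, (Ici n).indicator q i = ∑ n ∈ u with n ≤ i, q i := by
        simp only [indicator_apply, mem_Ici, Finset.sum_filter]
    _ ≤ ∑ n ∈ Finset.Iic i, q i :=
        Finset.sum_le_sum_of_subset_of_nonneg (fun n hn => by simp_all) fun _ _ _ => hq0 i
    _ = (i : ℝ) * q i := by
        rw [Finset.sum_const, Finset.Iic_eq_Icc, PNat.card_Icc, nsmul_eq_mul]
        simp

lemma summable_tailSum {q : ℕ+ → ℝ} (hq0 : ∀ n, 0 ≤ q n)
    (hq : Summable fun n : ℕ+ => (n : ℝ) * q n) : Summable (tailSum q) := by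
  have hq' := summable_of_summable_pnat_mul hq0 hq
  refine summable_of_sum_le (c := ∑' i : ℕ+, (i : ℝ) * q i) (tailSum_nonneg hq0) fun u => ?_
  simp only [tailSum]
  rw [← Summable.tsum_finsetSum fun n _ => hq'.indicator _]
  exact Summable.tsum_le_tsum (sum_indicator_Ici_le q hq0 u)
    (summable_sum fun n _ => hq'.indicator _) hq

lemma exists_hasSum_one_eventually_le {ι : Type*} [Nonempty ι] {T : ι → ℝ}
    (hT0 : ∀ i, 0 ≤ T i) (hT : Summable T) :
    ∃ b : ι → ℝ, (∀ i, 0 ≤ b i) ∧ HasSum b 1 ∧ ∀ᶠ i in cofinite, T i ≤ b i := by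
  classical
  obtain ⟨s, hs⟩ := ((tendsto_order.1 (tendsto_tsum_compl_atTop_zero T)).2 1 one_pos).exists
  set R := ∑' i : {i // i ∉ s}, T i
  have hR : HasSum ((↑s : Set ι)ᶜ.indicator T) R :=
    hasSum_subtype_iff_indicator.1 (hT.subtype _).hasSum
  obtain ⟨i₀⟩ := ‹Nonempty ι›
  have hsingle : 0 ≤ Pi.single (M := fun _ : ι => ℝ) i₀ (1 - R) :=
    Pi.single_nonneg.2 (sub_nonneg.2 hs.le)
  refine ⟨(↑s : Set ι)ᶜ.indicator T + Pi.single i₀ (1 - R), fun i => ?_, ?_, ?_⟩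
  · exact add_nonneg (indicator_nonneg (fun i _ => hT0 i) i) (hsingle i)
  · have h := hR.add (hasSum_pi_single i₀ (1 - R))
    rwa [add_sub_cancel] at h
  · refine eventually_cofinite.2 (s.finite_toSet.subset fun i hi => ?_)
    by_contra his
    exact hi (le_add_of_le_of_nonneg (by simp [his]) (hsingle i))

lemma cyclePrice_le_tailSum {τ : Perm ℕ+} {q : ℕ+ → ℝ} (hq0 : ∀ n, 0 ≤ q n) (hq : Summable q)
    {n : ℕ+} (hmin : ∀ m, τ.SameCycle n m → n ≤ m) : cyclePrice τ q n ≤ tailSum q n := by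
  rw [cyclePrice, tailSum, tsum_subtype]
  exact Summable.tsum_le_tsum (indicator_le_indicator_of_subset hmin fun i => hq0 i)
    (hq.indicator _) (hq.indicator _)

lemma infinite_setOf_forall_sameCycle_le {α : Type*} [LinearOrder α] [WellFoundedLT α]
    [Infinite α] {τ : Perm α} (hτ : ∀ n, {m | τ.SameCycle n m}.Finite) :
    {n | ∀ m, τ.SameCycle n m → n ≤ m}.Infinite := by
  intro hfin
  refine infinite_univ (α := α) ((hfin.biUnion fun n _ => hτ n).subset fun x _ => ?_)
  set c := {m | τ.SameCycle x m}
  have hmin := wellFounded_lt.min_mem c ⟨x, Perm.SameCycle.refl τ x⟩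
  exact mem_biUnion (x := wellFounded_lt.min c ⟨x, Perm.SameCycle.refl τ x⟩)
    (fun m hm => not_lt.1 (wellFounded_lt.not_lt_min c (hmin.trans hm))) hmin.symm

lemma sameCycle_conj_iff {α : Type*} (σ δ : Perm α) (n m : α) :
    (δ⁻¹ * σ * δ).SameCycle n m ↔ σ.SameCycle (δ n) (δ m) := by
  simpa using Perm.sameCycle_conj (f := σ) (g := δ⁻¹) (x := n) (y := m)

lemma FiniteCycles.conj {σ : Perm ℕ+} (hσ : FiniteCycles σ) (δ : Perm ℕ+) :
    FiniteCycles (δ⁻¹ * σ * δ) := fun n =>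
  ((hσ (δ n)).preimage δ.injective.injOn).subset fun m hm => (sameCycle_conj_iff σ δ n m).1 hm

lemma cyclePrice_conj (σ δ : Perm ℕ+) (p : ℕ+ → ℝ) (n : ℕ+) :
    cyclePrice σ p (δ n) = cyclePrice (δ⁻¹ * σ * δ) (fun m => p (δ m)) n :=
  ((δ.subtypeEquiv fun m => sameCycle_conj_iff σ δ n m).tsum_eq fun m => p m).symm

theorem stmt_1_general (p : ℕ+ → ℝ) (hp : ∀ n, 0 ≤ p n)
    (h : ∃ δ : Equiv.Perm ℕ+, Summable fun n : ℕ+ => (n : ℝ) * p (δ n)) :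
    ∃ a : ℕ+ → ℝ, (∀ n, 0 ≤ a n) ∧ HasSum a 1 ∧
      ∀ σ : Equiv.Perm ℕ+, FiniteCycles σ →
        {n : ℕ+ | cyclePrice σ p n ≤ a n}.Infinite := by
  obtain ⟨δ, hδ⟩ := h
  set q : ℕ+ → ℝ := fun n => p (δ n)
  have hq0 : ∀ n, 0 ≤ q n := fun n => hp (δ n)
  have hq := summable_of_summable_pnat_mul hq0 hδ
  obtain ⟨b, hb0, hb, hbT⟩ :=
    exists_hasSum_one_eventually_le (tailSum_nonneg hq0) (summable_tailSum hq0 hδ)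
  refine ⟨fun m => b (δ.symm m), fun m => hb0 _, (δ.symm.hasSum_iff).2 hb, fun σ hσ => ?_⟩
  have hmins := (infinite_setOf_forall_sameCycle_le (hσ.conj δ)).sdiff hbT
  refine (hmins.image δ.injective.injOn).mono ?_
  rintro _ ⟨n, ⟨hmin, hle⟩, rfl⟩
  show cyclePrice σ p (δ n) ≤ b (δ.symm (δ n))
  rw [Equiv.symm_apply_apply, cyclePrice_conj]
  exact (cyclePrice_le_tailSum hq0 hq hmin).trans (notMem_compl_iff.1 hle)

theorem stmt_1 (p : ℕ+ → ℝ) (hp : ∀ n, 0 ≤ p n) (hpsum : HasSum p 1)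
    (h : ∃ δ : Equiv.Perm ℕ+, Summable fun n : ℕ+ => (n : ℝ) * p (δ n)) :
    ∃ a : ℕ+ → ℝ, (∀ n, 0 ≤ a n) ∧ HasSum a 1 ∧
      ∀ σ : Equiv.Perm ℕ+, FiniteCycles σ →
        {n : ℕ+ | cyclePrice σ p n ≤ a n}.Infinite :=
  stmt_1_general p hp h
end

section
/- Let p : ℕ⁺ → ℝ be a sequence with p_n ≥ 0 for all n, having infinitely many indices n with p_n > 0, and suppose p is summable. Let e : ℕ⁺ → ℕ⁺ be the strictly increasing enumeration of the set {n : p_n > 0} and let q_n = p_{e(n)} (the sequence obtained by omitting the zero terms of p). Then the following are equivalent: (1) ∑_{n=1}^∞ n·p_{δ(n)} = ∞ for every permutation δ of the positive integers; (2) ∑_{n=1}^∞ n·p_{δ(n)} = ∞ for every permutation δ such that (p_{δ(n)}) is quasi-descending; (3) ∑_{n=1}^∞ n·q_{δ(n)} = ∞ for every permutation δ of the positive integers; (4) ∑_{n=1}^∞ n·q_{δ(n)} = ∞ for every permutation δ such that (q_{δ(n)}) is descending (q_{δ(n+1)} ≤ q_{δ(n)} for all n). -/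
open scoped BigOperators

/-- A nonnegative sequence is quasi-descending if whenever `x n > 0` and `n < m`,
then `x m ≤ x n`. -/
def QuasiDescending (x : ℕ+ → ℝ) : Prop :=
  ∀ n m : ℕ+, 0 < x n → n < m → x m ≤ x n

/-!
A positive summable sequence has a descending arrangement (its terms tend to `0`), and this
arrangement minimises `∑ n x_n` among all injective placements of the terms: by Abel summation this reduces to the fact that any `N`
distinct positions sum to at least `1 + ⋯ + N`. Hence (4) forces (3), and also (1), since the
positive terms of any arrangement of `p` sit at injectively chosen positions. Conversely, from
a descending arrangement of `q` with `∑ n q_n < ∞` one gets a quasi-descending arrangement of `p`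
by placing the positive terms in order at positions `m 1 < m 2 < ⋯` with `m k = O(k)` and
filling the remaining positions with the zeros of `p`: after finitely many zeros if there are
finitely many, and at the odd positions otherwise.
-/

open Function

section Rearrangement

open Finset

theorem Finset.sum_range_card_le_sum (s : Finset ℕ) : ∑ i ∈ range #s, i ≤ ∑ i ∈ s, i := by
  induction s using Finset.induction_on_max with
  | empty => simp
  | insert a s hlt ih =>
    have ha : a ∉ s := fun h => lt_irrefl a (hlt a h)
    have hcard : #s ≤ a := by
      simpa using card_le_card (fun x hx => mem_range.2 (hlt x hx) : s ⊆ range a)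
    rw [card_insert_of_notMem ha, sum_range_succ, sum_insert ha]
    omega

theorem Finset.sum_range_le_sum_range_of_injective {J : ℕ → ℕ} (hJ : Injective J) (N : ℕ) :
    ∑ i ∈ range N, i ≤ ∑ i ∈ range N, J i := by
  simpa [card_image_of_injective _ hJ, sum_image hJ.injOn] using
    (range N).image J |>.sum_range_card_le_sum

theorem Finset.sum_range_mul_nonneg_of_antitone {a u : ℕ → ℝ} (hu : Antitone u)
    (hu0 : ∀ n, 0 ≤ u n) (ha : ∀ n, 0 ≤ ∑ i ∈ range n, a i) (N : ℕ) :
    0 ≤ ∑ i ∈ range N, a i * u i := by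
  have hparts := sum_range_by_parts u a N
  simp only [smul_eq_mul] at hparts
  rw [sum_congr rfl fun i _ => mul_comm (a i) (u i), hparts, sub_nonneg]
  calc ∑ i ∈ range (N - 1), (u (i + 1) - u i) * ∑ j ∈ range (i + 1), a j
      ≤ 0 := sum_nonpos fun i _ => mul_nonpos_of_nonpos_of_nonneg
        (sub_nonpos.2 (hu (Nat.le_succ i))) (ha _)
    _ ≤ u (N - 1) * ∑ i ∈ range N, a i := mul_nonneg (hu0 _) (ha N)

theorem Finset.sum_range_mul_le_sum_range_mul_of_injective {u : ℕ → ℝ} (hu : Antitone u)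
    (hu0 : ∀ n, 0 ≤ u n) {J : ℕ → ℕ} (hJ : Injective J) (N : ℕ) :
    ∑ i ∈ range N, (i : ℝ) * u i ≤ ∑ i ∈ range N, (J i : ℝ) * u i := by
  have := sum_range_mul_nonneg_of_antitone (a := fun i => (J i : ℝ) - i) hu hu0
    (fun n => by
      rw [sum_sub_distrib, sub_nonneg]
      simpa using (Nat.cast_le (α := ℝ)).2 (sum_range_le_sum_range_of_injective hJ n)) N
  simpa [sub_mul] using this

theorem summable_coe_mul_comp_of_antitone {f : ℕ+ → ℝ} (hf : ∀ n, 0 ≤ f n)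
    (hsum : Summable fun n : ℕ+ => (n : ℝ) * f n) {ι : ℕ+ → ℕ+} (hι : Injective ι)
    (hanti : Antitone (f ∘ ι)) : Summable fun k : ℕ+ => (k : ℝ) * f (ι k) := by
  have h := hsum.comp_injective hι
  rw [← Equiv.pnatEquivNat.symm.summable_iff] at h ⊢
  simp only [comp_def, Equiv.pnatEquivNat_symm_apply] at h ⊢
  set J : ℕ → ℕ := fun n => (ι n.succPNat).natPred
  have hJ : Injective J := fun m n hmn => Nat.succPNat_injective <| hι <|
    PNat.natPred_injective hmn
  have hcoe : ∀ n : ℕ, ((ι n.succPNat : ℕ+) : ℝ) = J n + 1 := fun n => by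
    exact_mod_cast (PNat.natPred_add_one _).symm
  have hu : Antitone fun n : ℕ => f (ι n.succPNat) := fun m n hmn => hanti (by simpa using hmn)
  refine summable_of_sum_range_le
    (c := ∑' n : ℕ, ((ι n.succPNat : ℕ+) : ℝ) * f (ι n.succPNat))
    (fun n => mul_nonneg (by positivity) (hf _)) fun N => ?_
  calc ∑ n ∈ range N, ((n.succPNat : ℕ+) : ℝ) * f (ι n.succPNat)
      = ∑ n ∈ range N, (n : ℝ) * f (ι n.succPNat) + ∑ n ∈ range N, f (ι n.succPNat) := by
        simp [add_mul, sum_add_distrib]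
    _ ≤ ∑ n ∈ range N, (J n : ℝ) * f (ι n.succPNat) + ∑ n ∈ range N, f (ι n.succPNat) := by
        grw [sum_range_mul_le_sum_range_mul_of_injective hu (fun _ => hf _) hJ N]
    _ = ∑ n ∈ range N, ((ι n.succPNat : ℕ+) : ℝ) * f (ι n.succPNat) := by
        simp [hcoe, add_mul, sum_add_distrib]
    _ ≤ _ := h.sum_le_tsum _ fun n _ => mul_nonneg (by positivity) (hf _)

end Rearrangement

theorem PNat.antitone_iff_forall_add_one_le {α : Type*} [Preorder α] {f : ℕ+ → α} :
    Antitone f ↔ ∀ n, f (n + 1) ≤ f n :=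
  ⟨fun hf n => hf (PNat.lt_add_right n 1).le, fun h => antitone_of_succ_le fun n _ => h n⟩

section Arrangements

open Set Filter Topology

theorem exists_equiv_nat_strictMono_comp {β α : Type*} [LinearOrder α] [Infinite β]
    {κ : β → α} (hκ : Injective κ) (hfin : ∀ b, {c | κ c < κ b}.Finite) :
    ∃ ρ : ℕ ≃ β, StrictMono (κ ∘ ρ) := by
  set r : β → ℕ := fun b => {c | κ c < κ b}.ncard
  have hr : ∀ {a b}, κ a < κ b → r a < r b := fun {a b} hab =>
    ncard_lt_ncard ⟨fun c hc => lt_trans hc hab, fun hsub => lt_irrefl _ (hsub hab)⟩ (hfin b)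
  have hr_inj : Injective r := fun a b hab => hκ <| by
    rcases lt_trichotomy (κ a) (κ b) with h | h | h
    · exact absurd hab (hr h).ne
    · exact h
    · exact absurd hab (hr h).ne'
  have hr_surj : Surjective r := by
    intro k
    obtain ⟨_, ⟨b, rfl⟩, hkb⟩ := (infinite_range_of_injective hr_inj).exists_gt k
    have himage : r '' {c | κ c < κ b} = Iio (r b) :=
      eq_of_subset_of_ncard_le (image_subset_iff.2 fun c hc => hr hc)
        (by rw [ncard_Iio_nat, hr_inj.injOn.ncard_image])
    obtain ⟨a, -, ha⟩ : k ∈ r '' {c | κ c < κ b} := himage ▸ hkb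
    exact ⟨a, ha⟩
  set ρ := (Equiv.ofBijective r ⟨hr_inj, hr_surj⟩).symm
  have hrρ : ∀ i, r (ρ i) = i := (Equiv.ofBijective r _).apply_symm_apply
  refine ⟨ρ, fun i j hij => lt_of_not_ge fun hji => ?_⟩
  rcases hji.lt_or_eq with h | h
  · exact (hr h).not_gt (by simpa [hrρ] using hij)
  · exact hij.ne (by simpa [hrρ] using congrArg r (hκ h).symm)

theorem exists_perm_antitone_comp {v : ℕ+ → ℝ} (hv : Tendsto v cofinite (𝓝 0))
    (hpos : ∀ n, 0 < v n) : ∃ ρ : Equiv.Perm ℕ+, Antitone (v ∘ ρ) := by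
  set κ : ℕ+ → ℝ ×ₗ ℕ+ := fun n => toLex (-v n, n)
  have hκ : ∀ {a b}, κ a ≤ κ b → v b ≤ v a := fun h => by
    rcases Prod.Lex.toLex_le_toLex.1 h with h | ⟨h, -⟩ <;> simp at h <;> linarith
  have hfin : ∀ b, {c | κ c < κ b}.Finite := fun b =>
    (hv.eventually (gt_mem_nhds (hpos b))).subset fun c hc => not_lt.2 (hκ (le_of_lt hc))
  obtain ⟨ρ, hρ⟩ := exists_equiv_nat_strictMono_comp
    (fun a b h => congrArg (fun x => (ofLex x).2) h : Injective κ) hfin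
  exact ⟨OrderIso.pnatIsoNat.toEquiv.trans ρ, fun i j hij =>
    hκ (hρ.monotone (OrderIso.pnatIsoNat.monotone hij))⟩

theorem exists_strictMono_compl_equiv_of_finite {T : Set ℕ+} (hT : T.Finite) :
    ∃ (m : ℕ+ → ℕ+) (C : ℝ), StrictMono m ∧ (∀ k, (m k : ℝ) ≤ C * k) ∧
      Nonempty (↥(range m)ᶜ ≃ T) := by
  set N := T.ncard
  set m : ℕ+ → ℕ+ := fun k => ⟨k + N, Nat.add_pos_left k.pos N⟩
  have hm_coe : ∀ k, (m k : ℕ) = k + N := fun k => rfl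
  have hcompl : (range m)ᶜ = Nat.succPNat '' Iio N := by
    ext n
    constructor
    · intro h
      have hn := n.natPred_add_one
      refine ⟨n.natPred, lt_of_not_ge fun (hN : N ≤ n.natPred) =>
        h ⟨⟨n - N, by omega⟩, PNat.eq ?_⟩, n.succPNat_natPred⟩
      show (n : ℕ) - N + N = n
      omega
    · rintro ⟨i, hi, rfl⟩ ⟨k, hk⟩
      have := congrArg PNat.val hk
      rw [hm_coe, Nat.succPNat_coe] at this
      have := k.pos
      rw [mem_Iio] at hi
      omega
  refine ⟨m, N + 1, fun a b hab => ?_, fun k => ?_, ?_⟩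
  · rw [← PNat.coe_lt_coe, hm_coe, hm_coe]
    simpa using hab
  · have : (1 : ℝ) ≤ k := by exact_mod_cast k.pos
    rw [hm_coe, Nat.cast_add]
    nlinarith
  · have : Finite ↥(range m)ᶜ := hcompl ▸ (finite_Iio N).image _
    have : Finite T := hT
    refine Finite.card_eq.1 ?_
    rw [Nat.card_coe_set_eq, Nat.card_coe_set_eq, hcompl,
      ncard_image_of_injective _ Nat.succPNat_injective, ncard_Iio_nat]

theorem exists_strictMono_compl_equiv_of_infinite {T : Set ℕ+} (hT : T.Infinite) :
    ∃ (m : ℕ+ → ℕ+) (C : ℝ), StrictMono m ∧ (∀ k, (m k : ℝ) ≤ C * k) ∧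
      Nonempty (↥(range m)ᶜ ≃ T) := by
  refine ⟨fun k => 2 * k, 2, fun a b hab => by simpa using hab, fun k => by simp, ?_⟩
  have : Infinite ↥(range fun k : ℕ+ => 2 * k)ᶜ := by
    refine infinite_coe_iff.2 (infinite_of_injective_forall_mem
      (f := fun j : ℕ => (2 * j).succPNat) (fun i j hij => by simpa using hij) fun j => ?_)
    rintro ⟨k, hk⟩
    have := congrArg PNat.val hk
    simp at this
    omega
  have : Infinite T := infinite_coe_iff.2 hT
  exact nonempty_equiv_of_countable

theorem exists_strictMono_compl_equiv (T : Set ℕ+) :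
    ∃ (m : ℕ+ → ℕ+) (C : ℝ), StrictMono m ∧ (∀ k, (m k : ℝ) ≤ C * k) ∧
      Nonempty (↥(range m)ᶜ ≃ T) := by
  by_cases hT : T.Finite
  exacts [exists_strictMono_compl_equiv_of_finite hT, exists_strictMono_compl_equiv_of_infinite hT]

theorem exists_quasiDescending_perm {p : ℕ+ → ℝ} (hp : ∀ n, 0 ≤ p n) {g : ℕ+ → ℕ+}
    (hg : Injective g) (hrange : range g = {n | 0 < p n}) (hanti : Antitone (p ∘ g))
    (hsum : Summable fun k : ℕ+ => (k : ℝ) * p (g k)) :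
    ∃ δ : Equiv.Perm ℕ+, QuasiDescending (fun n => p (δ n)) ∧
      Summable fun n : ℕ+ => (n : ℝ) * p (δ n) := by
  classical
  obtain ⟨m, C, hm, hC, ⟨w⟩⟩ := exists_strictMono_compl_equiv (range g)ᶜ
  set δ : Equiv.Perm ℕ+ := Equiv.subtypeCongr
    ((Equiv.ofInjective m hm.injective).symm.trans (Equiv.ofInjective g hg)) w
  have hδm : ∀ k, δ (m k) = g k := fun k => by
    simp [δ, Equiv.subtypeCongr, Equiv.sumCompl_symm_apply_of_pos (mem_range_self k)]
  have hδ0 : ∀ n ∉ range m, p (δ n) = 0 := fun n hn => by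
    have hδn : δ n = w ⟨n, hn⟩ := by
      simp [δ, Equiv.subtypeCongr, Equiv.sumCompl_symm_apply_of_neg hn]
    have : δ n ∉ {n | 0 < p n} := hrange ▸ hδn ▸ (w ⟨n, hn⟩).2
    exact le_antisymm (not_lt.1 this) (hp _)
  refine ⟨δ, fun n n' hn hlt => ?_, ?_⟩
  · dsimp only at hn ⊢
    obtain ⟨k, rfl⟩ : n ∈ range m := by_contra fun h => hn.ne' (hδ0 n h)
    by_cases hn' : n' ∈ range m
    · obtain ⟨k', rfl⟩ := hn'
      rw [hδm, hδm]
      exact hanti (hm.lt_iff_lt.1 hlt).le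
    · rw [hδ0 n' hn']
      exact hn.le
  · rw [← hm.injective.summable_iff fun n hn => by simp [hδ0 n hn]]
    refine (hsum.mul_left C).of_nonneg_of_le (fun k => ?_) fun k => ?_ <;>
      simp only [comp_apply, hδm]
    · exact mul_nonneg (by positivity) (hp _)
    · rw [← mul_assoc]
      exact mul_le_mul_of_nonneg_right (hC k) (hp _)

end Arrangements

theorem stmt_8_general (p : ℕ+ → ℝ) (hp : ∀ n, 0 ≤ p n)
    (hpsum : Summable p)
    (e : ℕ+ → ℕ+) (he : StrictMono e) (hrange : Set.range e = {n : ℕ+ | 0 < p n})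
    (q : ℕ+ → ℝ) (hq : ∀ n, q n = p (e n)) :
    List.TFAE
      [∀ δ : Equiv.Perm ℕ+, ¬ Summable fun n : ℕ+ => (n : ℝ) * p (δ n),
       ∀ δ : Equiv.Perm ℕ+, QuasiDescending (fun n => p (δ n)) →
         ¬ Summable fun n : ℕ+ => (n : ℝ) * p (δ n),
       ∀ δ : Equiv.Perm ℕ+, ¬ Summable fun n : ℕ+ => (n : ℝ) * q (δ n),
       ∀ δ : Equiv.Perm ℕ+, (∀ n : ℕ+, q (δ (n + 1)) ≤ q (δ n)) →
         ¬ Summable fun n : ℕ+ => (n : ℝ) * q (δ n)] := by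
  obtain rfl : q = p ∘ e := funext hq
  have hqpos : ∀ n, 0 < p (e n) := fun n => hrange.subset (Set.mem_range_self n)
  obtain ⟨ρ, hρ⟩ := exists_perm_antitone_comp
    (hpsum.comp_injective he.injective).tendsto_cofinite_zero hqpos
  tfae_have 1 → 2 := fun h δ _ => h δ
  tfae_have 2 → 4 := fun h τ hτ hsum => by
    obtain ⟨δ, hδ, hδsum⟩ := exists_quasiDescending_perm hp (he.injective.comp τ.injective)
      (by rw [Set.range_comp, τ.range_eq_univ, Set.image_univ, hrange])
      (PNat.antitone_iff_forall_add_one_le.2 hτ) hsum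
    exact h δ hδ hδsum
  tfae_have 4 → 1 := fun h δ hδ => h ρ (PNat.antitone_iff_forall_add_one_le.1 hρ) <| by
    simpa using summable_coe_mul_comp_of_antitone (fun n => hp (δ n)) hδ
      (δ.symm.injective.comp (he.injective.comp ρ.injective)) (by simpa [comp_def] using hρ)
  tfae_have 4 → 3 := fun h σ hσ => h ρ (PNat.antitone_iff_forall_add_one_le.1 hρ) <| by
    simpa using summable_coe_mul_comp_of_antitone (fun n => hp (e (σ n))) hσ
      (σ.symm.injective.comp ρ.injective) (by simpa [comp_def] using hρ)
  tfae_have 3 → 4 := fun h δ _ => h δ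
  tfae_finish

theorem stmt_8 (p : ℕ+ → ℝ) (hp : ∀ n, 0 ≤ p n)
    (hinf : {n : ℕ+ | 0 < p n}.Infinite) (hpsum : Summable p)
    (e : ℕ+ → ℕ+) (he : StrictMono e) (hrange : Set.range e = {n : ℕ+ | 0 < p n})
    (q : ℕ+ → ℝ) (hq : ∀ n, q n = p (e n)) :
    List.TFAE
      [∀ δ : Equiv.Perm ℕ+, ¬ Summable fun n : ℕ+ => (n : ℝ) * p (δ n),
       ∀ δ : Equiv.Perm ℕ+, QuasiDescending (fun n => p (δ n)) →
         ¬ Summable fun n : ℕ+ => (n : ℝ) * p (δ n),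
       ∀ δ : Equiv.Perm ℕ+, ¬ Summable fun n : ℕ+ => (n : ℝ) * q (δ n),
       ∀ δ : Equiv.Perm ℕ+, (∀ n : ℕ+, q (δ (n + 1)) ≤ q (δ n)) →
         ¬ Summable fun n : ℕ+ => (n : ℝ) * q (δ n)] :=
  stmt_8_general p hp hpsum e he hrange q hq
end

section
/- Let p : ℕ⁺ → ℝ with p_n ≥ 0 and ∑_{n=1}^∞ p_n = 1, and let a : ℕ⁺ → ℝ with a_n ≥ 0 and ∑_{n=1}^∞ a_n = 1. Let δ be a permutation of the positive integers such that a_{δ(n+1)} ≤ a_{δ(n)} for all n. If ∑_{n=1}^∞ n·p_{δ(n)} = ∞, then there exists a finite-cycle-permutation σ of the positive integers such that the set {n : a_n ≥ ∑_{m ∈ orbit_σ(n)} p_m} is finite (i.e., the guard can defeat the amount distribution a). -/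
open scoped BigOperators ENNReal

/-!
After reindexing by `δ`, the amounts `a` become antitone on `ℕ`. Since
`∑ₖ ∑_{n ≥ k} pₙ = ∑ₙ (n + 1) pₙ = ∞` while `∑ₖ aₖ < ∞`, the tail `∑_{n ≥ k} pₙ` exceeds `aₖ`
for infinitely many `k`, so there are `K₀ < K₁ < ⋯` with `a (K j) < ∑_{K j ≤ i < K (j+1)} pᵢ`.
The guard cycles each block `[K j, K (j + 1))`: every prisoner of that block has amount at most
`a (K j)`, which is less than the price of the block.
-/

open Finset Filter

namespace Equiv.Perm

variable {α β : Type*}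

theorem sameCycle_finRotate {n : ℕ} (i j : Fin n) : (finRotate n).SameCycle i j :=
  ⟨(j - i).val, by
    have := i.neZero
    rw [zpow_natCast, ← iterate_eq_pow, ← finCycle_eq_finRotate_iterate, finCycle_apply,
      add_sub_cancel]⟩

theorem sameCycle_permCongr (e : α ≃ β) (p : Perm α) {x y : β} :
    (e.permCongr p).SameCycle x y ↔ p.SameCycle (e.symm x) (e.symm y) :=
  exists_congr fun z => by
    rw [← permCongrHom_coe, ← map_zpow, permCongrHom_coe, permCongr_apply, ← e.eq_symm_apply]

theorem sameCycle_sigmaCongrRight_iff {ι : Type*} {κ : ι → Type*} {F : ∀ i, Perm (κ i)}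
    (hF : ∀ i (a b : κ i), (F i).SameCycle a b) {x y : Σ i, κ i} :
    (sigmaCongrRight F).SameCycle x y ↔ x.1 = y.1 := by
  have hzpow : ∀ z : ℤ, sigmaCongrRight F ^ z = sigmaCongrRight (F ^ z) := fun z =>
    (map_zpow (sigmaCongrRightHom κ) F z).symm
  constructor
  · rintro ⟨z, rfl⟩
    rw [hzpow]
    rfl
  · obtain ⟨i, a⟩ := x
    obtain ⟨j, b⟩ := y
    rintro (rfl : i = j)
    obtain ⟨z, hz⟩ := hF i a b
    exact ⟨z, by simp [hzpow, hz]⟩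

theorem exists_sameCycle_iff_eq (f : α → β) (hf : ∀ b, (f ⁻¹' {b}).Finite) :
    ∃ σ : Perm α, ∀ x y, σ.SameCycle x y ↔ f x = f y := by
  have (b : β) : Finite {x // f x = b} := (hf b).to_subtype
  let rotate (b : β) : Perm {x // f x = b} :=
    (Finite.equivFin {x // f x = b}).symm.permCongr (finRotate _)
  have hrotate (b : β) (u v : {x // f x = b}) : (rotate b).SameCycle u v :=
    (sameCycle_permCongr _ _).2 (sameCycle_finRotate _ _)
  exact ⟨(sigmaFiberEquiv f).permCongr (sigmaCongrRight rotate), fun x y => by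
    rw [sameCycle_permCongr, sameCycle_sigmaCongrRight_iff hrotate]; rfl⟩

end Equiv.Perm

section Tails

variable {P A : ℕ → ℝ}

theorem sum_range_succ_mul_le_sum_range_tsum (hP0 : ∀ n, 0 ≤ P n) (hP : Summable P) (N : ℕ) :
    ∑ n ∈ range N, ((n : ℝ) + 1) * P n ≤ ∑ k ∈ range N, ∑' n, P (k + n) :=
  calc ∑ n ∈ range N, ((n : ℝ) + 1) * P n = ∑ k ∈ range N, ∑ n ∈ Ico k N, P n := by
        rw [range_eq_Ico, sum_Ico_Ico_comm]
        simp
    _ ≤ ∑ k ∈ range N, ∑' n, P (k + n) := sum_le_sum fun k _ => by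
        rw [sum_Ico_eq_sum_range]
        exact ((summable_nat_add_iff k).2 hP |>.congr fun n => by rw [add_comm]).sum_le_tsum _
          fun n _ => hP0 _

theorem not_summable_tsum_nat_add (hP0 : ∀ n, 0 ≤ P n) (hP : Summable P)
    (h : ¬ Summable fun n : ℕ => ((n : ℝ) + 1) * P n) : ¬ Summable fun k => ∑' n, P (k + n) :=
  fun hT => h <| summable_of_sum_range_le (fun n => by have := hP0 n; positivity) fun N =>
    (sum_range_succ_mul_le_sum_range_tsum hP0 hP N).trans <|
      hT.sum_le_tsum _ fun k _ => tsum_nonneg fun n => hP0 _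

theorem frequently_lt_tsum_nat_add (hP0 : ∀ n, 0 ≤ P n) (hP : Summable P) (hA : Summable A)
    (h : ¬ Summable fun n : ℕ => ((n : ℝ) + 1) * P n) :
    ∃ᶠ k in atTop, A k < ∑' n, P (k + n) := by
  refine fun hle => not_summable_tsum_nat_add hP0 hP h (hA.of_norm_bounded_eventually_nat ?_)
  filter_upwards [hle] with k hk
  rw [Real.norm_of_nonneg (tsum_nonneg fun n => hP0 _)]
  exact not_lt.1 hk

theorem eventually_lt_sum_Ico (hP0 : ∀ n, 0 ≤ P n) (hP : Summable P) {k : ℕ} {x : ℝ}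
    (hx : x < ∑' n, P (k + n)) : ∀ᶠ l in atTop, x < ∑ i ∈ Ico k l, P i := by
  have hsum : HasSum (fun n => P (k + n)) (∑' n, P (k + n)) :=
    ((summable_nat_add_iff k).2 hP |>.congr fun n => by rw [add_comm]).hasSum
  obtain ⟨L, hL⟩ := (hsum.tendsto_sum_nat.eventually (lt_mem_nhds hx)).exists
  filter_upwards [eventually_ge_atTop (k + L)] with l hl
  calc x < ∑ i ∈ Ico k (k + L), P i := by rwa [sum_Ico_eq_sum_range, Nat.add_sub_cancel_left]
    _ ≤ ∑ i ∈ Ico k l, P i :=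
        sum_le_sum_of_subset_of_nonneg (Ico_subset_Ico_right hl) fun i _ _ => hP0 i

theorem exists_strictMono_lt_sum_Ico (hP0 : ∀ n, 0 ≤ P n) (hP : Summable P) (hA : Summable A)
    (h : ¬ Summable fun n : ℕ => ((n : ℝ) + 1) * P n) :
    ∃ K : ℕ → ℕ, StrictMono K ∧ ∀ j, A (K j) < ∑ i ∈ Ico (K j) (K (j + 1)), P i := by
  set S : ℕ → Prop := fun k => A k < ∑' n, P (k + n)
  have hS : ∃ᶠ k in atTop, S k := frequently_lt_tsum_nat_add hP0 hP hA h
  have hnext (k : ℕ) : ∃ l, k < l ∧ (S k → A k < ∑ i ∈ Ico k l, P i) ∧ S l := by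
    have hev : ∀ᶠ l in atTop, S k → A k < ∑ i ∈ Ico k l, P i := by
      by_cases hk : S k
      · simpa [hk] using eventually_lt_sum_Ico hP0 hP hk
      · simp [hk]
    exact (((eventually_gt_atTop k).and hev).and_frequently hS).exists.imp fun l hl =>
      ⟨hl.1.1, hl.1.2, hl.2⟩
  choose next hlt hsum hS_next using hnext
  obtain ⟨k₀, hk₀⟩ := hS.exists
  have hK_succ (j : ℕ) : next^[j + 1] k₀ = next (next^[j] k₀) := Function.iterate_succ_apply' ..
  have hKS (j : ℕ) : S (next^[j] k₀) := by
    induction j with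
    | zero => exact hk₀
    | succ j _ => rw [hK_succ]; exact hS_next _
  refine ⟨fun j => next^[j] k₀, strictMono_nat_of_lt_succ fun j => ?_, fun j => ?_⟩
  · simp only [hK_succ]
    exact hlt _
  · simp only [hK_succ]
    exact hsum _ (hKS j)

end Tails

section Blocks

variable {K : ℕ → ℕ}

-- For `i < K 0` this is `0`: the initial segment `[0, K 0)` joins the block `[K 0, K 1)`.
def blockIndex (K : ℕ → ℕ) (i : ℕ) : ℕ := Nat.findGreatest (fun j => K j ≤ i) i

theorem apply_blockIndex_le {i : ℕ} (hi : K 0 ≤ i) : K (blockIndex K i) ≤ i :=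
  Nat.findGreatest_spec (P := fun j => K j ≤ i) (Nat.zero_le i) hi

theorem lt_apply_blockIndex_add_one (hK : StrictMono K) (i : ℕ) :
    i < K (blockIndex K i + 1) := by
  by_contra! hle
  exact Nat.findGreatest_is_greatest (Nat.lt_succ_self _) ((hK.id_le _).trans hle) hle

theorem blockIndex_eq_of_mem_Ico (hK : StrictMono K) {i j : ℕ}
    (hi : i ∈ Ico (K j) (K (j + 1))) : blockIndex K i = j := by
  obtain ⟨hji, hij⟩ := mem_Ico.1 hi
  have := hK.lt_iff_lt.1 ((apply_blockIndex_le ((hK.monotone j.zero_le).trans hji)).trans_lt hij)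
  have := hK.lt_iff_lt.1 (hji.trans_lt (lt_apply_blockIndex_add_one hK i))
  omega

theorem finite_blockIndex_preimage (hK : StrictMono K) (j : ℕ) :
    (blockIndex K ⁻¹' {j}).Finite :=
  (Set.finite_Iio (K (j + 1))).subset fun i (hi : blockIndex K i = j) =>
    hi ▸ lt_apply_blockIndex_add_one hK i

end Blocks

theorem Finset.sum_le_tsum_subtype {α : Type*} {f : α → ℝ} (hf0 : ∀ a, 0 ≤ f a) (hf : Summable f)
    {s : Set α} {t : Finset α} (hts : ↑t ⊆ s) : ∑ a ∈ t, f a ≤ ∑' a : s, f a := by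
  rw [← Finset.tsum_subtype]
  exact Summable.tsum_le_tsum_of_inj (Set.inclusion hts) (Set.inclusion_injective hts)
    (fun _ _ => hf0 _) (fun _ => le_rfl) .of_finite (hf.subtype _)

theorem stmt_10_general (p : ℕ+ → ℝ) (hp : ∀ n, 0 ≤ p n) (hpsum : HasSum p 1)
    (a : ℕ+ → ℝ) (hasum : HasSum a 1)
    (δ : Equiv.Perm ℕ+) (hδ : ∀ n : ℕ+, a (δ (n + 1)) ≤ a (δ n))
    (h : ¬ Summable fun n : ℕ+ => (n : ℝ) * p (δ n)) :
    ∃ σ : Equiv.Perm ℕ+, FiniteCycles σ ∧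
      {n : ℕ+ | cyclePrice σ p n ≤ a n}.Finite := by
  set c : ℕ+ ≃ ℕ := δ.symm.trans Equiv.pnatEquivNat
  set P : ℕ → ℝ := fun i => p (c.symm i)
  set A : ℕ → ℝ := fun i => a (c.symm i)
  have hA_anti : Antitone A := antitone_nat_of_succ_le fun i => hδ i.succPNat
  have hPw : ¬ Summable fun i : ℕ => ((i : ℝ) + 1) * P i := fun hs =>
    h <| Equiv.pnatEquivNat.symm.summable_iff.1 <| hs.congr fun i => by simp [P, c]
  obtain ⟨K, hK, hKP⟩ := exists_strictMono_lt_sum_Ico (fun i => hp _)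
    (c.symm.summable_iff.2 hpsum.summable) (c.symm.summable_iff.2 hasum.summable) hPw
  obtain ⟨σ, hσ⟩ := Equiv.Perm.exists_sameCycle_iff_eq (blockIndex K ∘ c) fun j =>
    Set.Finite.preimage (f := c) c.injective.injOn (finite_blockIndex_preimage hK j)
  refine ⟨σ, fun n => ?_, ?_⟩
  · exact ((finite_blockIndex_preimage hK (blockIndex K (c n))).preimage c.injective.injOn).subset
      fun m hm => ((hσ n m).1 hm).symm
  refine ((Set.finite_Iio (K 0)).preimage c.injective.injOn).subset
    fun n (hn : cyclePrice σ p n ≤ a n) => ?_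
  show c n < K 0
  by_contra! h0
  set j := blockIndex K (c n)
  have hblock : ∀ m ∈ (Ico (K j) (K (j + 1))).map c.symm.toEmbedding, σ.SameCycle n m := by
    simp only [Finset.mem_map, Equiv.coe_toEmbedding]
    rintro _ ⟨i, hi, rfl⟩
    simp [hσ, blockIndex_eq_of_mem_Ico hK hi, j]
  refine hn.not_gt ?_
  calc a n = A (c n) := by simp [A]
    _ ≤ A (K j) := hA_anti (apply_blockIndex_le h0)
    _ < ∑ i ∈ Ico (K j) (K (j + 1)), P i := hKP j
    _ = ∑ m ∈ (Ico (K j) (K (j + 1))).map c.symm.toEmbedding, p m :=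
        (sum_map _ c.symm.toEmbedding p).symm
    _ ≤ cyclePrice σ p n := sum_le_tsum_subtype (fun _ => hp _) hpsum.summable hblock

theorem stmt_10 (p : ℕ+ → ℝ) (hp : ∀ n, 0 ≤ p n) (hpsum : HasSum p 1)
    (a : ℕ+ → ℝ) (ha : ∀ n, 0 ≤ a n) (hasum : HasSum a 1)
    (δ : Equiv.Perm ℕ+) (hδ : ∀ n : ℕ+, a (δ (n + 1)) ≤ a (δ n))
    (h : ¬ Summable fun n : ℕ+ => (n : ℝ) * p (δ n)) :
    ∃ σ : Equiv.Perm ℕ+, FiniteCycles σ ∧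
      {n : ℕ+ | cyclePrice σ p n ≤ a n}.Finite :=
  stmt_10_general p hp hpsum a hasum δ hδ h
end

section
/- Let p : ℕ⁺ → ℝ with p_n > 0 for all n and ∑_{n=1}^∞ p_n = 1. Then for every sequence a : ℕ⁺ → ℝ with a_n ≥ 0 and ∑_{n=1}^∞ a_n = 1, there exists a permutation σ of the positive integers all of whose orbits have cardinality at most 2, such that the set {n : a_n < ∑_{m ∈ orbit_σ(n)} p_m} is infinite (i.e., in Version 1.b, knowing that all cycles have length at most 2 does not make a strategy possible). -/
open scoped BigOperators ENNReal

/-! Since `∑ aₙ` converges, `aₙ → 0`, so for every `m` all but finitely many `n` satisfy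
`aₙ < pₘ < pₙ + pₘ`. Choosing such pairs `{n, m}` one after another, each disjoint from the
previous ones, and letting `σ` swap every pair gives infinitely many prisoners `n` whose
2-cycle costs more than `aₙ`. -/

open Function Filter Topology

namespace Equiv.Perm

variable {α : Type*}

theorem setOf_sameCycle_of_mul_self_eq_one {σ : Perm α} (h : σ * σ = 1) (x : α) :
    {y | σ.SameCycle x y} = {x, σ x} := by
  ext y
  refine ⟨?_, ?_⟩
  · rintro ⟨i, rfl⟩
    rw [zpow_eq_zpow_emod' i (n := 2) (by rw [sq, h])]
    rcases Int.emod_two_eq_zero_or_one i with hi | hi <;> simp [hi]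
  · rintro (rfl | rfl)
    · exact SameCycle.refl σ y
    · exact sameCycle_apply_right.mpr (SameCycle.refl σ x)

theorem exists_mul_self_eq_one_apply_eq {ι : Type*} (g : ι × Bool ↪ α) :
    ∃ σ : Perm α, σ * σ = 1 ∧ ∀ i, σ (g (i, true)) = g (i, false) := by
  let e : Perm (ι × Bool) := prodCongrRight fun _ => boolNot
  refine ⟨viaEmbeddingHom g e, ?_, fun i => viaEmbedding_apply e g (i, true)⟩
  rw [← map_mul, show e * e = 1 by ext ⟨i, b⟩ <;> simp [e], map_one]

end Equiv.Perm

theorem exists_embedding_of_forall_finset_exists_pair {α : Type*} (P : α → α → Prop)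
    (h : ∀ s : Finset α, ∃ x ∉ s, ∃ y ∉ s, x ≠ y ∧ P x y) :
    ∃ g : ℕ × Bool ↪ α, ∀ k, P (g (k, true)) (g (k, false)) := by
  classical
  let pair : α × α → Finset α := fun q => {q.1, q.2}
  let r : α × α → α × α → Prop := fun q q' => Disjoint (pair q) (pair q')
  have : Std.Symm r := ⟨fun _ _ hqq' => hqq'.symm⟩
  obtain ⟨f, hfP, hf⟩ := exists_seq_of_forall_finset_exists' (fun q => q.1 ≠ q.2 ∧ P q.1 q.2) r
    fun s _ => by
      obtain ⟨x, hx, y, hy, hxy, hP⟩ := h (s.biUnion pair)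
      have h_notMem {z} (hz : z ∉ s.biUnion pair) (q) (hq : q ∈ s) : z ∉ pair q :=
        fun hzq => hz (Finset.mem_biUnion.mpr ⟨q, hq, hzq⟩)
      exact ⟨(x, y), ⟨hxy, hP⟩, fun q hq => Finset.disjoint_insert_right.mpr
        ⟨h_notMem hx q hq, Finset.disjoint_singleton_right.mpr (h_notMem hy q hq)⟩⟩
  let g : ℕ × Bool → α := fun kb => if kb.2 then (f kb.1).1 else (f kb.1).2
  have hg_mem : ∀ kb, g kb ∈ pair (f kb.1) := by
    rintro ⟨k, _ | _⟩ <;> simp [g, pair]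
  refine ⟨⟨g, ?_⟩, fun k => (hfP k).2⟩
  rintro ⟨k, b⟩ ⟨k', b'⟩ hkk'
  obtain rfl : k = k' := by
    by_contra hne
    exact Finset.disjoint_left.mp (hf hne) (hg_mem (k, b)) (hkk' ▸ hg_mem (k', b'))
  cases b <;> cases b' <;> simp_all [g, (hfP k).1, (hfP k).1.symm]

theorem exists_pair_lt_add_notMem_finset {α : Type*} [Infinite α] {a p : α → ℝ}
    (ha : Tendsto a cofinite (𝓝 0)) (hp : ∀ n, 0 < p n) (s : Finset α) :
    ∃ n ∉ s, ∃ m ∉ s, n ≠ m ∧ a n < p n + p m := by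
  classical
  obtain ⟨m, hm⟩ := Infinite.exists_notMem_finset s
  obtain ⟨n, hnm, hn⟩ := ((ha.eventually_lt_const (hp m)).and
    (insert m s).eventually_cofinite_notMem).exists
  rw [Finset.mem_insert, not_or] at hn
  exact ⟨n, hn.2, m, hm, hn.1, by linarith [hp n]⟩

theorem cyclePrice_of_mul_self_eq_one {σ : Equiv.Perm ℕ+} (h : σ * σ = 1) (p : ℕ+ → ℝ) {n : ℕ+}
    (hn : σ n ≠ n) : cyclePrice σ p n = p n + p (σ n) := by
  classical
  rw [cyclePrice, Equiv.Perm.setOf_sameCycle_of_mul_self_eq_one h,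
    ← Finset.coe_pair, Finset.tsum_subtype', Finset.sum_pair hn.symm]

theorem stmt_15_general (p : ℕ+ → ℝ) (hp : ∀ n, 0 < p n) :
    ∀ a : ℕ+ → ℝ, (∀ n, 0 ≤ a n) → HasSum a 1 →
      ∃ σ : Equiv.Perm ℕ+, FiniteCycles σ ∧
        (∀ n : ℕ+, ({m : ℕ+ | σ.SameCycle n m}).ncard ≤ 2) ∧
        {n : ℕ+ | a n < cyclePrice σ p n}.Infinite := by
  intro a _ ha
  obtain ⟨g, hg⟩ := exists_embedding_of_forall_finset_exists_pair _
    (exists_pair_lt_add_notMem_finset ha.summable.tendsto_cofinite_zero hp)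
  obtain ⟨σ, hσ, hσg⟩ := Equiv.Perm.exists_mul_self_eq_one_apply_eq g
  have h_cycle := Equiv.Perm.setOf_sameCycle_of_mul_self_eq_one hσ
  refine ⟨σ, fun n => h_cycle n ▸ Set.toFinite _, fun n => ?_, ?_⟩
  · rw [h_cycle]
    exact (Set.ncard_insert_le _ _).trans (by rw [Set.ncard_singleton])
  · refine Set.infinite_of_injective_forall_mem (f := fun k => g (k, true))
      (g.injective.comp fun _ _ h => (Prod.mk.inj h).1) fun k => ?_
    have hne : g (k, false) ≠ g (k, true) := g.injective.ne (by simp)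
    rw [Set.mem_ofPred_eq, cyclePrice_of_mul_self_eq_one hσ p (hσg k ▸ hne), hσg k]
    exact hg k

theorem stmt_15 (p : ℕ+ → ℝ) (hp : ∀ n, 0 < p n) (hpsum : HasSum p 1) :
    ∀ a : ℕ+ → ℝ, (∀ n, 0 ≤ a n) → HasSum a 1 →
      ∃ σ : Equiv.Perm ℕ+, FiniteCycles σ ∧
        (∀ n : ℕ+, ({m : ℕ+ | σ.SameCycle n m}).ncard ≤ 2) ∧
        {n : ℕ+ | a n < cyclePrice σ p n}.Infinite :=
  stmt_15_general p hp
end
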